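/- Let V : M → Q⊗E and W : M' → Q⊗E be isometries, with Q and R single qubits, and let |φ⁰⟩_{M'EX}, |φ¹⟩_{MEX} be arbitrary pure states. Define |ψ⁰⟩ = (V† ⊗ id)(|Φ⁺⟩_{RQ} ⊗ |φ⁰⟩_{M'EX}) and |ψ¹⟩ = (W† ⊗ id)(|Φ⁺⟩_{RQ} ⊗ |φ¹⟩_{MEX}). Then |⟨ψ⁰|ψ¹⟩| ≤ 1/2. -/

import Mathlib

open Matrix
open scoped Classical ComplexOrder

noncomputable def binEnt (x : ℝ) : ℝ := -x * Real.logb 2 x - (1 - x) * Real.logb 2 (1 - x)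

/-- von Neumann entropy (base 2) of a matrix, via eigenvalues (0 if not Hermitian). -/
noncomputable def vnEnt {d : Type*} [Fintype d] [DecidableEq d] (ρ : Matrix d d ℂ) : ℝ :=
  if h : ρ.IsHermitian then ∑ i, -(h.eigenvalues i) * Real.logb 2 (h.eigenvalues i) else 0

/-- Trace norm of a Hermitian matrix (0 if not Hermitian). -/
noncomputable def traceNorm {d : Type*} [Fintype d] [DecidableEq d] (A : Matrix d d ℂ) : ℝ :=
  if h : A.IsHermitian then ∑ i, |h.eigenvalues i| else 0

/-- The old Mathlib `Matrix.PosSemidef.sqrt` (removed since), restated with its old definition. -/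
noncomputable def Matrix.PosSemidef.sqrt {n 𝕜 : Type*} [Fintype n] [DecidableEq n] [RCLike 𝕜]
    {A : Matrix n n 𝕜} (hA : A.PosSemidef) : Matrix n n 𝕜 :=
  hA.1.eigenvectorUnitary.1 * diagonal ((↑) ∘ (√·) ∘ hA.1.eigenvalues) *
    (star hA.1.eigenvectorUnitary : Matrix n n 𝕜)

noncomputable def fidelity {d : Type*} [Fintype d] [DecidableEq d] (ρ σ : Matrix d d ℂ) : ℝ :=
  if hσ : σ.PosSemidef then
    if h : (hσ.sqrt * ρ * hσ.sqrt).IsHermitian then ∑ i, Real.sqrt (h.eigenvalues i) else 0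
  else 0

noncomputable def pdist {d : Type*} [Fintype d] [DecidableEq d] (ρ σ : Matrix d d ℂ) : ℝ :=
  Real.sqrt (1 - (fidelity ρ σ) ^ 2)

def IsState {d : Type*} [Fintype d] [DecidableEq d] (ρ : Matrix d d ℂ) : Prop :=
  ρ.PosSemidef ∧ ρ.trace = 1

/-- partial trace over the second tensor factor -/
noncomputable def ptraceR {a b : Type*} [Fintype b] (ρ : Matrix (a × b) (a × b) ℂ) : Matrix a a ℂ :=
  fun i j => ∑ k, ρ (i, k) (j, k)

/-- partial trace over the first tensor factor -/
noncomputable def ptraceL {a b : Type*} [Fintype a] (ρ : Matrix (a × b) (a × b) ℂ) : Matrix b b ℂ :=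
  fun i j => ∑ k, ρ (k, i) (k, j)

/-- conditional von Neumann entropy H(A|B) of a state on A × B -/
noncomputable def condEnt {a b : Type*} [Fintype a] [Fintype b] [DecidableEq a] [DecidableEq b]
    (ρ : Matrix (a × b) (a × b) ℂ) : ℝ := vnEnt ρ - vnEnt (ptraceL ρ)

/-- computational-basis projector on a qubit -/
noncomputable def Pc (b : Fin 2) : Matrix (Fin 2) (Fin 2) ℂ := fun i j => if i = b ∧ j = b then 1 else 0

/-- Hadamard-basis projector on a qubit -/
noncomputable def Ph (b : Fin 2) : Matrix (Fin 2) (Fin 2) ℂ :=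
  fun i j => (1 / 2 : ℂ) * (-1) ^ ((i : ℕ) * (b : ℕ)) * (-1) ^ ((b : ℕ) * (j : ℕ))

/-- measure the first (qubit) factor with rank-one projectors `P`, storing the outcome
classically in its place -/
noncomputable def cqMeasure {m : Type*} [Fintype m] (P : Fin 2 → Matrix (Fin 2) (Fin 2) ℂ)
    (ρ : Matrix (Fin 2 × m) (Fin 2 × m) ℂ) : Matrix (Fin 2 × m) (Fin 2 × m) ℂ :=
  fun zi z'j => if zi.1 = z'j.1 then ∑ r, ∑ t, (P zi.1) r t * ρ (t, zi.2) (r, z'j.2) else 0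

/-- outer product |ψ⟩⟨ψ| of a vector -/
noncomputable def outer {d : Type*} (ψ : d → ℂ) : Matrix d d ℂ := fun i j => ψ i * (starRingEnd ℂ) (ψ j)

/-!
The two `Φ⁺` caps glue the `Q`-legs of `V` and `W` together, so that
`2 ⟨ψ⁰|ψ¹⟩ = ⟨σ ((W ⊗ 1) φ⁰), (V ⊗ 1) φ¹⟩`, where `σ` exchanges the two `E`-legs.
Both vectors are unit vectors because `V ⊗ 1` and `W ⊗ 1` are isometries, and Cauchy–Schwarz
gives `|⟨ψ⁰|ψ¹⟩| ≤ 1/2`.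
-/

open scoped Kronecker

theorem star_dotProduct_self_eq_sum_norm_sq {ι : Type*} [Fintype ι] (v : ι → ℂ) :
    star v ⬝ᵥ v = ((∑ i, ‖v i‖ ^ 2 : ℝ) : ℂ) := by
  push_cast
  refine Finset.sum_congr rfl fun i _ => ?_
  rw [Pi.star_apply, Complex.star_def, mul_comm, Complex.mul_conj']

theorem sum_norm_sq_mulVec_of_isometry {ι μ : Type*} [Fintype ι] [Fintype μ] [DecidableEq μ]
    {A : Matrix ι μ ℂ} (hA : Aᴴ * A = 1) (v : μ → ℂ) :
    ∑ i, ‖(A *ᵥ v) i‖ ^ 2 = ∑ m, ‖v m‖ ^ 2 := by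
  have h : star (A *ᵥ v) ⬝ᵥ (A *ᵥ v) = star v ⬝ᵥ v := by
    rw [star_mulVec, dotProduct_mulVec, vecMul_vecMul, hA, vecMul_one]
  rw [star_dotProduct_self_eq_sum_norm_sq, star_dotProduct_self_eq_sum_norm_sq] at h
  exact_mod_cast h

theorem conjTranspose_mul_self_kronecker_one {ι κ μ : Type*} [Fintype ι] [Fintype κ]
    [DecidableEq μ] [DecidableEq κ] {A : Matrix ι μ ℂ} (hA : Aᴴ * A = 1) :
    (A ⊗ₖ (1 : Matrix κ κ ℂ))ᴴ * (A ⊗ₖ (1 : Matrix κ κ ℂ)) = 1 := by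
  rw [conjTranspose_kronecker, conjTranspose_one, ← mul_kronecker_mul, hA, Matrix.mul_one,
    one_kronecker_one]

theorem kronecker_one_mulVec_apply {ι κ μ : Type*} [Fintype κ] [Fintype μ] [DecidableEq κ]
    (A : Matrix ι μ ℂ) (v : μ × κ → ℂ) (i : ι) (k : κ) :
    ((A ⊗ₖ (1 : Matrix κ κ ℂ)) *ᵥ v) (i, k) = ∑ m, A i m * v (m, k) := by
  simp [mulVec, dotProduct, kroneckerMap_apply, one_apply, Fintype.sum_prod_type]

theorem norm_star_dotProduct_le {ι : Type*} [Fintype ι] (u v : ι → ℂ) :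
    ‖star u ⬝ᵥ v‖ ≤ √(∑ i, ‖u i‖ ^ 2) * √(∑ i, ‖v i‖ ^ 2) := by
  have h := norm_inner_le_norm (𝕜 := ℂ) (WithLp.toLp 2 u : EuclideanSpace ℂ ι) (WithLp.toLp 2 v)
  simpa [EuclideanSpace.inner_eq_star_dotProduct, EuclideanSpace.norm_eq, dotProduct_comm] using h

theorem sum_sum_mul_ite_mul {Q E : Type*} [Fintype Q] [Fintype E] [DecidableEq Q] (r : Q) (c : ℂ)
    (A : Q → E → ℂ) (B : E → ℂ) :
    ∑ q, ∑ e, A q e * (if r = q then c else 0) * B e = c * ∑ e, A r e * B e := by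
  simp only [mul_ite, ite_mul, mul_zero, zero_mul, Finset.sum_ite_irrel, Finset.sum_const_zero,
    Finset.sum_ite_eq, Finset.mem_univ, if_true, Finset.mul_sum]
  exact Finset.sum_congr rfl fun e _ => by ring

def swapEnv (Q E X : Type*) : (Q × E) × E × X ≃ (Q × E) × E × X :=
  Function.Involutive.toPerm (fun p => ((p.1.1, p.2.1), p.1.2, p.2.2)) fun _ => rfl

@[simp]
theorem swapEnv_apply {Q E X : Type*} (q : Q) (e e' : E) (x : X) :
    swapEnv Q E X ((q, e), e', x) = ((q, e'), e, x) := rfl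

theorem overlap_eq_star_dotProduct_swapEnv {Q E M M' X : Type*} [Fintype Q] [Fintype E]
    [Fintype M] [Fintype M'] [Fintype X] [DecidableEq E] [DecidableEq X]
    (V : Matrix (Q × E) M ℂ) (W : Matrix (Q × E) M' ℂ)
    (φ0 : M' × E × X → ℂ) (φ1 : M × E × X → ℂ) :
    ∑ p : Q × M × M' × X,
      (starRingEnd ℂ) (∑ e, (starRingEnd ℂ) (V (p.1, e) p.2.1) * φ0 (p.2.2.1, e, p.2.2.2)) *
        ∑ e, (starRingEnd ℂ) (W (p.1, e) p.2.2.1) * φ1 (p.2.1, e, p.2.2.2) =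
    star (((W ⊗ₖ (1 : Matrix (E × X) (E × X) ℂ)) *ᵥ φ0) ∘ swapEnv Q E X) ⬝ᵥ
      ((V ⊗ₖ (1 : Matrix (E × X) (E × X) ℂ)) *ᵥ φ1) := by
  simp only [dotProduct, Fintype.sum_prod_type, Pi.star_apply, Function.comp_apply,
    swapEnv_apply, kronecker_one_mulVec_apply, map_sum, map_mul, Complex.star_def,
    Complex.conj_conj, Finset.sum_mul, Finset.mul_sum]
  refine Finset.sum_congr rfl fun r _ => ?_
  simp only [← Fintype.sum_prod_type']
  exact Fintype.sum_equiv ⟨fun p => (p.2.2.2.2, p.2.2.2.1, p.2.2.1, p.1, p.2.1),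
    fun p => (p.2.2.2.1, p.2.2.2.2, p.2.2.1, p.2.1, p.1), fun _ => rfl, fun _ => rfl⟩ _ _
    fun _ => by simp only [Equiv.coe_fn_mk]; ring

/-- tensor-network overlap bound: with isometries `V : M → Q⊗E`,
`W : M' → Q⊗E` and arbitrary pure states `φ⁰, φ¹`, the states
`ψ⁰ = V†(|Φ⁺⟩_{RQ} ⊗ |φ⁰⟩_{M'EX})` and `ψ¹ = W†(|Φ⁺⟩_{RQ} ⊗ |φ¹⟩_{MEX})`
have overlap at most `1/2`. -/
theorem overlap_le_half (dM dM' dE dX : ℕ)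
    (V : Matrix (Fin 2 × Fin dE) (Fin dM) ℂ) (W : Matrix (Fin 2 × Fin dE) (Fin dM') ℂ)
    (hV : Vᴴ * V = 1) (hW : Wᴴ * W = 1)
    (φ0 : Fin dM' × Fin dE × Fin dX → ℂ) (φ1 : Fin dM × Fin dE × Fin dX → ℂ)
    (hφ0 : ∑ p, ‖φ0 p‖ ^ 2 = 1) (hφ1 : ∑ p, ‖φ1 p‖ ^ 2 = 1)
    (ψ0 ψ1 : Fin 2 × Fin dM × Fin dM' × Fin dX → ℂ)
    (hψ0 : ψ0 = fun p => ∑ q : Fin 2, ∑ e : Fin dE,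
      (starRingEnd ℂ) (V (q, e) p.2.1) * (if p.1 = q then ((Real.sqrt 2 : ℝ) : ℂ)⁻¹ else 0) *
        φ0 (p.2.2.1, e, p.2.2.2))
    (hψ1 : ψ1 = fun p => ∑ q : Fin 2, ∑ e : Fin dE,
      (starRingEnd ℂ) (W (q, e) p.2.2.1) * (if p.1 = q then ((Real.sqrt 2 : ℝ) : ℂ)⁻¹ else 0) *
        φ1 (p.2.1, e, p.2.2.2)) :
    ‖∑ p, (starRingEnd ℂ) (ψ0 p) * ψ1 p‖ ≤ 1 / 2 := by
  subst hψ0 hψ1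
  set c : ℂ := ((Real.sqrt 2 : ℝ) : ℂ)⁻¹
  have hc : ‖(starRingEnd ℂ) c * c‖ = 1 / 2 := by
    rw [norm_mul, Complex.norm_conj, ← sq, norm_inv, Complex.norm_real, Real.norm_eq_abs,
      abs_of_nonneg (Real.sqrt_nonneg 2), inv_pow, Real.sq_sqrt zero_le_two, one_div]
  have hcs := norm_star_dotProduct_le (((W ⊗ₖ 1) *ᵥ φ0) ∘ swapEnv (Fin 2) (Fin dE) (Fin dX))
    ((V ⊗ₖ 1) *ᵥ φ1)
  simp only [Function.comp_apply,
    Equiv.sum_comp (swapEnv _ _ _) fun i => ‖((W ⊗ₖ 1) *ᵥ φ0) i‖ ^ 2,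
    sum_norm_sq_mulVec_of_isometry (conjTranspose_mul_self_kronecker_one hW),
    sum_norm_sq_mulVec_of_isometry (conjTranspose_mul_self_kronecker_one hV), hφ0, hφ1,
    Real.sqrt_one, mul_one] at hcs
  simp only [sum_sum_mul_ite_mul, map_mul, mul_mul_mul_comm ((starRingEnd ℂ) c), ← Finset.mul_sum,
    norm_mul, hc, overlap_eq_star_dotProduct_swapEnv]
  linarith
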